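/- arXiv:0808.4069 — 2 statements merged into one kernel-verified Lean document; each statement's English description precedes it below -/
import Mathlib

section
/- If f(1+x) = Σ_{n=0}^N a_n x^n ∈ 1 + xF_p[x] is a polynomial endomorphism of the group of 1-units U = 1 + xF_p[[x]], then f(1+x) = (1+x)^N', i.e., f is the N'-th power map for some nonnegative integer N'. -/
open PowerSeries

/-- Coefficientwise substitution of a power series `x` with zero constant term into `f`. -/
noncomputable def applySeries {R : Type*} [CommRing R] (f x : PowerSeries R) : PowerSeries R :=
  PowerSeries.mk fun k => ∑ n ∈ Finset.range (k + 1), coeff n f * coeff k (x ^ n)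

/-- `f ∈ 1 + x R[[x]]` defines an endomorphism of the group of 1-units. -/
def IsOneUnitEndo {R : Type*} [CommRing R] (f : PowerSeries R) : Prop :=
  constantCoeff f = 1 ∧
    ∀ u v : PowerSeries R, constantCoeff u = 1 → constantCoeff v = 1 →
      applySeries f (u * v - 1) = applySeries f (u - 1) * applySeries f (v - 1)

/-!
Write `f = P` with `P` a polynomial of degree `N` and leading coefficient `a`. Multiplicativity
at `u = 1 + X`, `v = 1 + X ^ M` reads `P(X ^ M (1 + X) + X) = P(X) P(X ^ M)`. For `M > N` the
monomial `X ^ M` behaves like a second independent variable: modulo polynomials of degree `< M N`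
the left side is `a X ^ (M N) (1 + X) ^ N` and the right side is `a X ^ (M N) P`, so
`P = (1 + X) ^ N`.
-/

namespace PowerSeries

variable {R : Type*} [CommRing R]

theorem exists_coe_eq_of_coeff_eq_zero {f : R⟦X⟧} {N : ℕ} (hf : ∀ n > N, coeff n f = 0) :
    ∃ P : Polynomial R, (P : R⟦X⟧) = f := by
  refine ⟨trunc (N + 1) f, ext fun n => ?_⟩
  rw [Polynomial.coeff_coe, coeff_trunc]
  split_ifs with hn
  · rfl
  · exact (hf n (by omega)).symm

theorem coeff_pow_eq_zero_of_lt {x : R⟦X⟧} (hx : constantCoeff x = 0) {n k : ℕ} (hk : k < n) :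
    coeff k (x ^ n) = 0 :=
  X_pow_dvd_iff.1 (pow_dvd_pow_of_dvd (X_dvd_iff.2 hx) n) k hk

end PowerSeries

namespace Polynomial

variable {R : Type*} [CommRing R]

theorem sum_range_succ_sub_last_mem_degreeLT {t : ℕ → R[X]} {N L : ℕ}
    (ht : ∀ n < N, (t n).natDegree < L) :
    ∑ n ∈ Finset.range (N + 1), t n - t N ∈ degreeLT R L := by
  rw [Finset.sum_range_succ, add_sub_cancel_right]
  refine Submodule.sum_mem _ fun n hn => mem_degreeLT.2 ?_
  exact degree_le_natDegree.trans_lt (WithBot.coe_lt_coe.2 (ht n (Finset.mem_range.1 hn)))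

theorem eq_zero_of_X_pow_mul_mem_degreeLT {p : R[X]} {L : ℕ} (h : X ^ L * p ∈ degreeLT R L) :
    p = 0 := by
  ext i
  rw [← coeff_X_pow_mul, coeff_zero]
  exact (degree_lt_iff_coeff_zero _ _).1 (mem_degreeLT.1 h) _ (Nat.le_add_left L i)

theorem mul_comp_sub_mem_degreeLT (r p q : R[X]) {L : ℕ}
    (h : ∀ n < p.natDegree, r.natDegree + n * q.natDegree < L) :
    r * p.comp q - r * (C p.leadingCoeff * q ^ p.natDegree) ∈ degreeLT R L := by
  have hp : p.comp q = ∑ n ∈ Finset.range (p.natDegree + 1), C (p.coeff n) * q ^ n :=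
    eval₂_eq_sum_range _ _
  rw [hp, Finset.mul_sum, leadingCoeff]
  refine sum_range_succ_sub_last_mem_degreeLT (t := fun n => r * (C (p.coeff n) * q ^ n))
    fun n hn => ?_
  calc (r * (C (p.coeff n) * q ^ n)).natDegree
      ≤ r.natDegree + (C (p.coeff n) * q ^ n).natDegree := natDegree_mul_le
    _ ≤ r.natDegree + n * q.natDegree := by
        gcongr; exact (natDegree_C_mul_le _ _).trans natDegree_pow_le
    _ < L := h n hn

theorem add_X_pow_sub_pow_mem_degreeLT (x : R[X]) (n : ℕ) {L : ℕ}
    (h : ∀ m < n, m * x.natDegree + (n - m) < L) : (x + X) ^ n - x ^ n ∈ degreeLT R L := by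
  have := sum_range_succ_sub_last_mem_degreeLT
    (t := fun m => x ^ m * X ^ (n - m) * (n.choose m : R[X])) (N := n) (L := L)
    fun m (hm : m < n) => ?_
  · simpa [← add_pow] using this
  calc (x ^ m * X ^ (n - m) * (n.choose m : R[X])).natDegree
      ≤ m * x.natDegree + (n - m) := by
        refine natDegree_mul_le.trans ?_
        rw [natDegree_natCast, add_zero]
        exact natDegree_mul_le.trans (add_le_add natDegree_pow_le (natDegree_X_pow_le _))
    _ < L := h m hm

theorem eq_one_add_X_pow_of_comp_eq_mul_comp [IsDomain R] {P : R[X]} (hP : P ≠ 0) {M : ℕ}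
    (hM : P.natDegree < M) (h : P.comp (X ^ M * (1 + X) + X) = P * P.comp (X ^ M)) :
    P = (1 + X) ^ P.natDegree := by
  have hY : (X ^ M * (1 + X) : R[X]).natDegree ≤ M + 1 := by compute_degree
  have hYX : (X ^ M * (1 + X) + X : R[X]).natDegree ≤ M + 1 := by compute_degree
  have hLHS : P.comp (X ^ M * (1 + X) + X) - C P.leadingCoeff * (X ^ M * (1 + X)) ^ P.natDegree
      ∈ degreeLT R (M * P.natDegree) := by
    have hcomp := mul_comp_sub_mem_degreeLT 1 P (X ^ M * (1 + X) + X) (L := M * P.natDegree)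
      fun n hn => by
        have := Nat.mul_le_mul_left n hYX
        rw [natDegree_one, zero_add]
        nlinarith
    have hpow := add_X_pow_sub_pow_mem_degreeLT (X ^ M * (1 + X)) P.natDegree
      (L := M * P.natDegree) fun m hm => by
        have := Nat.mul_le_mul_left m hY
        obtain ⟨k, hk⟩ := Nat.exists_eq_add_of_lt hm
        have : P.natDegree - m = k + 1 := by omega
        nlinarith
    convert add_mem hcomp (Submodule.smul_mem _ P.leadingCoeff hpow) using 1
    rw [← C_mul']
    ring
  have hRHS := mul_comp_sub_mem_degreeLT P P (X ^ M) (L := M * P.natDegree) fun n hn => by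
    have := natDegree_X_pow_le (R := R) M
    nlinarith
  have hdiff : X ^ (M * P.natDegree) * (C P.leadingCoeff * (P - (1 + X) ^ P.natDegree))
      ∈ degreeLT R (M * P.natDegree) := by
    convert sub_mem hLHS hRHS using 1
    rw [h, mul_pow, pow_mul]
    ring
  have hzero := eq_zero_of_X_pow_mul_mem_degreeLT hdiff
  rw [mul_eq_zero, C_eq_zero, sub_eq_zero] at hzero
  exact hzero.resolve_left (leadingCoeff_ne_zero.2 hP)

theorem coe_comp_eq_aeval (P q : R[X]) :
    ((P.comp q : R[X]) : R⟦X⟧) = aeval (q : R⟦X⟧) P := by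
  simpa [coeToPowerSeries.algHom_apply, comp_eq_aeval] using
    (aeval_algHom_apply (coeToPowerSeries.algHom R) q P).symm

theorem applySeries_coe (P : R[X]) {x : R⟦X⟧} (hx : PowerSeries.constantCoeff x = 0) :
    applySeries (P : R⟦X⟧) x = aeval x P := by
  ext k
  rw [applySeries, PowerSeries.coeff_mk, aeval_def,
    eval₂_eq_sum_range' _ (by omega : P.natDegree < P.natDegree + k + 1), map_sum,
    ← Finset.sum_subset (Finset.range_subset_range.2 (by omega : k + 1 ≤ P.natDegree + k + 1))]
  · simp [PowerSeries.coeff_C_mul]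
  · intro n _ hn
    rw [Finset.mem_range, not_lt] at hn
    simp [PowerSeries.coeff_pow_eq_zero_of_lt hx hn]

theorem applySeries_coe_coe (P q : R[X]) (hq : q.coeff 0 = 0) :
    applySeries (P : R⟦X⟧) q = (P.comp q : R[X]) := by
  rw [applySeries_coe _ (by simpa using hq), coe_comp_eq_aeval]

theorem comp_eq_mul_comp_X_pow_of_isOneUnitEndo {P : R[X]} (hP : IsOneUnitEndo (P : R⟦X⟧))
    {M : ℕ} (hM : M ≠ 0) : P.comp (X ^ M * (1 + X) + X) = P * P.comp (X ^ M) := by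
  have h := hP.2 (1 + PowerSeries.X) (1 + PowerSeries.X ^ M) (by simp) (by simp [hM])
  have hu : (1 + PowerSeries.X : R⟦X⟧) - 1 = ((X : R[X]) : R⟦X⟧) := by simp
  have hv : (1 + PowerSeries.X ^ M : R⟦X⟧) - 1 = ((X ^ M : R[X]) : R⟦X⟧) := by simp
  have huv : (1 + PowerSeries.X) * (1 + PowerSeries.X ^ M) - 1 =
      ((X ^ M * (1 + X) + X : R[X]) : R⟦X⟧) := by push_cast; ring
  rw [hu, hv, huv, applySeries_coe_coe _ _ (by simp [hM.symm]), applySeries_coe_coe _ _ (by simp),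
    applySeries_coe_coe _ _ (by simp [hM.symm]), comp_X] at h
  exact_mod_cast h

end Polynomial

/-- A polynomial endomorphism of the group of 1-units `1 + x F_p[[x]]` is a power map:
`f(1+x) = (1+x)^N'` for some nonnegative integer `N'`. -/
theorem polynomial_endo_is_power {p : ℕ} [Fact p.Prime]
    (f : PowerSeries (ZMod p)) (hf : IsOneUnitEndo f)
    (hpoly : ∃ N : ℕ, ∀ n > N, coeff n f = 0) :
    ∃ N' : ℕ, f = (1 + X) ^ N' := by
  obtain ⟨N, hN⟩ := hpoly
  obtain ⟨P, rfl⟩ := exists_coe_eq_of_coeff_eq_zero hN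
  have hP : P ≠ 0 := by
    rintro rfl
    simpa using hf.1
  have hpow := Polynomial.eq_one_add_X_pow_of_comp_eq_mul_comp hP P.natDegree.lt_succ_self
    (Polynomial.comp_eq_mul_comp_X_pow_of_isOneUnitEndo hf P.natDegree.succ_ne_zero)
  refine ⟨P.natDegree, ?_⟩
  conv_lhs => rw [hpow]
  simp
end

section
/- For y ∈ Z_p, the sequence of binomial coefficients mod p, n ↦ C(y,n) ∈ F_p, is ultimately periodic if and only if y ∈ Z. -/
/-!
Write `y = ∑ dₘ pᵐ` in base `p`. For `n < pᵏ`, `C(x, n) mod p` depends only on `x mod pᵏ`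
(Vandermonde, with `p ∣ C(pᵏ, j)` for `0 < j < pᵏ`), and Lucas's theorem gives
`C(y, pᵐ + b) ≡ dₘ · C(y, b)` for `b < pᵐ`. If `y ∉ ℤ`, its digits are neither eventually `0` nor
eventually `p - 1`. A digit `dₖ ≠ p - 1` with `k ≥ r` gives `a = y mod pᵏ⁺¹` with `a + r < pᵏ⁺¹`,
so `C(y, a) = 1` and `C(y, a + r) = 0`; a later nonzero digit `dₘ` repeats this pattern at
`pᵐ + a` for arbitrarily large `m`, so `r` is not an eventual period.
Conversely `C(t, n) = 0` for `n > t`, while `C(-(t + 1), n) = (-1)ⁿ C(n + t, t)` has period `2pᵗ`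
mod `p` because `t < pᵗ`.
-/

/-- The `p`-adic binomial coefficient `C(y, n)` reduced mod `p`: since `C(·, n)` is `p`-adically
continuous and `n < p^(n+1)`, it equals `C(y', n) mod p` for any integer `y' ≡ y mod p^(n+1)`,
e.g. the canonical approximation `y.appr (n+1)`. -/
noncomputable def padicChoose {p : ℕ} [Fact p.Prime] (y : ℤ_[p]) (n : ℕ) : ZMod p :=
  ((y.appr (n + 1)).choose n : ZMod p)

def IsUltimatelyPeriodic {α : Type*} (s : ℕ → α) : Prop :=
  ∃ r : ℕ, 0 < r ∧ ∃ w : ℕ, ∀ n ≥ w, s (n + r) = s n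

section Binomial

variable {p : ℕ} [hp : Fact p.Prime]

theorem lt_prime_pow_succ (n : ℕ) : n < p ^ (n + 1) :=
  (Nat.lt_pow_self hp.out.one_lt).trans (Nat.pow_lt_pow_right hp.out.one_lt n.lt_succ_self)

theorem cast_ringChoose_add_pow (x : ℤ) {k n : ℕ} (hn : n < p ^ k) :
    ((Ring.choose (x + p ^ k) n : ℤ) : ZMod p) = Ring.choose x n := by
  rw [Ring.add_choose_eq n (Commute.all _ _), Int.cast_sum,
    Finset.sum_eq_single (n, 0) ?_ (by simp)]
  · simp
  rintro ⟨i, j⟩ hij hne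
  rw [Finset.HasAntidiagonal.mem_antidiagonal] at hij
  have hj : j ≠ 0 := by rintro rfl; simp_all
  rw [show (p : ℤ) ^ k = ((p ^ k : ℕ) : ℤ) by push_cast; rfl, Ring.choose_natCast, Int.cast_mul,
    Int.cast_natCast, (ZMod.natCast_eq_zero_iff _ _).mpr (hp.out.dvd_choose_pow hj (by omega)),
    mul_zero]

theorem cast_ringChoose_eq_of_modEq {x y : ℤ} {k n : ℕ} (h : x ≡ y [ZMOD p ^ k])
    (hn : n < p ^ k) : ((Ring.choose x n : ℤ) : ZMod p) = Ring.choose y n := by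
  obtain ⟨c, hc⟩ := h.dvd
  obtain rfl : y = x + p ^ k * c := by rw [← hc]; ring
  clear hc h
  induction c using Int.induction_on with
  | zero => simp
  | succ c ih => rw [ih, mul_add_one, ← add_assoc, cast_ringChoose_add_pow _ hn]
  | pred c ih => rw [ih, ← cast_ringChoose_add_pow (x + p ^ k * (-c - 1)) hn]; ring_nf

theorem cast_choose_eq_of_modEq {a b k n : ℕ} (h : a ≡ b [MOD p ^ k]) (hn : n < p ^ k) :
    (a.choose n : ZMod p) = b.choose n := by
  have h' : (a : ℤ) ≡ b [ZMOD p ^ k] := by exact_mod_cast (Int.natCast_modEq_iff).mpr h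
  simpa [Ring.choose_natCast] using cast_ringChoose_eq_of_modEq h' hn

theorem cast_choose_eq_choose_div_pow_mul_choose_mod_pow (A B j : ℕ) :
    (A.choose B : ZMod p) = (A / p ^ j).choose (B / p ^ j) * (A % p ^ j).choose (B % p ^ j) := by
  induction j generalizing A B with
  | zero => simp [Nat.mod_one]
  | succ j ih =>
    have lucas (A B : ℕ) :
        (A.choose B : ZMod p) = (A % p).choose (B % p) * (A / p).choose (B / p) := by
      exact_mod_cast (ZMod.natCast_eq_natCast_iff _ _ _).mpr
        Choose.choose_modEq_choose_mod_mul_choose_div_nat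
    rw [lucas A B, ih (A / p) (B / p), lucas (A % p ^ (j + 1)), pow_succ',
      Nat.mod_mul_right_mod, Nat.mod_mul_right_mod, Nat.mod_mul_right_div_self,
      Nat.mod_mul_right_div_self, Nat.div_div_eq_div_mul, Nat.div_div_eq_div_mul]
    ring

end Binomial

namespace PadicInt

variable {p : ℕ} [hp : Fact p.Prime]

noncomputable def digit (y : ℤ_[p]) (m : ℕ) : ℕ := y.appr (m + 1) / p ^ m

theorem appr_modEq (y : ℤ_[p]) {k N : ℕ} (h : k ≤ N) : y.appr N ≡ y.appr k [MOD p ^ k] :=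
  ((Nat.modEq_iff_dvd' (y.appr_mono h)).mpr (y.dvd_appr_sub_appr k N h)).symm

theorem appr_mod_pow (y : ℤ_[p]) {k N : ℕ} (h : k ≤ N) : y.appr N % p ^ k = y.appr k := by
  rw [appr_modEq y h, Nat.mod_eq_of_lt (y.appr_lt k)]

theorem appr_succ (y : ℤ_[p]) (m : ℕ) : y.appr (m + 1) = y.appr m + p ^ m * digit y m := by
  rw [digit, ← appr_mod_pow y m.le_succ, Nat.mod_add_div]

theorem digit_lt (y : ℤ_[p]) (m : ℕ) : digit y m < p :=
  Nat.div_lt_of_lt_mul (pow_succ p m ▸ y.appr_lt (m + 1))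

theorem appr_succ_add_pow_lt {y : ℤ_[p]} {m : ℕ} (hm : digit y m ≠ p - 1) :
    y.appr (m + 1) + p ^ m < p ^ (m + 1) := by
  have hd : digit y m + 2 ≤ p := by have := digit_lt y m; omega
  have := y.appr_lt m
  rw [appr_succ, pow_succ]
  nlinarith [Nat.mul_le_mul_left (p ^ m) hd]

theorem appr_modEq_iff_toZModPow_eq (y : ℤ_[p]) (z : ℤ) (k : ℕ) :
    (y.appr k : ℤ) ≡ z [ZMOD p ^ k] ↔ toZModPow k y = z := by
  rw [← Int.natCast_pow, ← ZMod.intCast_eq_intCast_iff, Int.cast_natCast]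
  rfl

theorem appr_intCast_modEq (z : ℤ) (k : ℕ) : ((z : ℤ_[p]).appr k : ℤ) ≡ z [ZMOD p ^ k] :=
  (appr_modEq_iff_toZModPow_eq _ _ _).mpr (map_intCast _ z)

theorem eq_intCast_of_forall_ge_appr_modEq {y : ℤ_[p]} {z : ℤ} (M : ℕ)
    (h : ∀ m ≥ M, (y.appr m : ℤ) ≡ z [ZMOD p ^ m]) : y = z := by
  refine ext_of_toZModPow.mp fun n => ?_
  have hN : toZModPow (max n M) y = toZModPow (max n M) (z : ℤ_[p]) := by
    rw [map_intCast]
    exact (appr_modEq_iff_toZModPow_eq _ _ _).mp (h _ (le_max_right n M))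
  rw [← cast_toZModPow n _ (le_max_left n M), hN, cast_toZModPow]
  exact le_max_left n M

theorem exists_digit_ne_zero {y : ℤ_[p]} (hy : ∀ z : ℤ, y ≠ z) (M : ℕ) :
    ∃ m ≥ M, digit y m ≠ 0 := by
  by_contra! h
  have hconst : ∀ m ≥ M, y.appr m = y.appr M := by
    intro m hm
    induction m, hm using Nat.le_induction with
    | base => rfl
    | succ m hm ih => rw [appr_succ, h m hm, mul_zero, add_zero, ih]
  exact hy (y.appr M) (eq_intCast_of_forall_ge_appr_modEq M fun m hm => by rw [hconst m hm])

theorem exists_digit_ne_pred {y : ℤ_[p]} (hy : ∀ z : ℤ, y ≠ z) (M : ℕ) :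
    ∃ m ≥ M, digit y m ≠ p - 1 := by
  by_contra! h
  have hshift : ∀ m ≥ M, (y.appr m : ℤ) = y.appr M - p ^ M + p ^ m := by
    intro m hm
    induction m, hm using Nat.le_induction with
    | base => ring
    | succ m hm ih =>
      rw [appr_succ]
      push_cast [h m hm, Nat.cast_sub hp.out.one_le]
      linear_combination ih
  refine hy (y.appr M - p ^ M) (eq_intCast_of_forall_ge_appr_modEq M fun m hm => ?_)
  rw [hshift m hm]
  exact Int.add_modEq_right

end PadicInt

section PadicChoose

open PadicInt

variable {p : ℕ} [hp : Fact p.Prime]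

theorem padicChoose_eq_choose_appr (y : ℤ_[p]) {k n : ℕ} (hn : n < p ^ k) :
    padicChoose y n = (y.appr k).choose n := by
  have hmin : n < p ^ min (n + 1) k := by
    rcases min_choice (n + 1) k with h | h <;> rw [h]
    exacts [lt_prime_pow_succ n, hn]
  rw [padicChoose, cast_choose_eq_of_modEq (y.appr_modEq (min_le_left _ _)) hmin,
    cast_choose_eq_of_modEq (y.appr_modEq (min_le_right _ _)) hmin]

theorem padicChoose_pow_add (y : ℤ_[p]) {m b : ℕ} (hb : b < p ^ m) :
    padicChoose y (p ^ m + b) = digit y m * padicChoose y b := by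
  have hlt : p ^ m + b < p ^ (m + 1) := by
    rw [pow_succ]; nlinarith [hp.out.two_le]
  have hdiv : (p ^ m + b) / p ^ m = 1 := Nat.div_eq_of_lt_le (by omega) (by omega)
  have hmod : (p ^ m + b) % p ^ m = b := by rw [Nat.add_mod_left, Nat.mod_eq_of_lt hb]
  rw [padicChoose_eq_choose_appr y hlt, cast_choose_eq_choose_div_pow_mul_choose_mod_pow _ _ m,
    hdiv, hmod, Nat.choose_one_right, padicChoose_eq_choose_appr y hb, appr_mod_pow y m.le_succ]
  rfl

theorem not_isUltimatelyPeriodic_padicChoose {y : ℤ_[p]} (hy : ∀ z : ℤ, y ≠ z) :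
    ¬IsUltimatelyPeriodic (padicChoose y) := by
  rintro ⟨r, hr, w, hper⟩
  obtain ⟨k, hrk, hk⟩ := exists_digit_ne_pred hy r
  set a := y.appr (k + 1)
  have hra : a + r < p ^ (k + 1) := by
    have := Nat.lt_pow_self (n := k) hp.out.one_lt
    have := appr_succ_add_pow_lt hk
    omega
  obtain ⟨m, hm, hdm⟩ := exists_digit_ne_zero hy (max (k + 1) w)
  have hkm : p ^ (k + 1) ≤ p ^ m := Nat.pow_le_pow_right hp.out.pos (le_of_max_le_left hm)
  have hwm : w < p ^ m := (le_of_max_le_right hm).trans_lt (Nat.lt_pow_self hp.out.one_lt)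
  have h_at_a : padicChoose y (p ^ m + a) = digit y m := by
    rw [padicChoose_pow_add y (by omega), padicChoose_eq_choose_appr y (y.appr_lt (k + 1)),
      Nat.choose_self, Nat.cast_one, mul_one]
  have h_at_a_add : padicChoose y (p ^ m + a + r) = 0 := by
    rw [add_assoc, padicChoose_pow_add y (by omega), padicChoose_eq_choose_appr y hra,
      Nat.choose_eq_zero_of_lt (by omega), Nat.cast_zero, mul_zero]
  have hdvd : p ∣ digit y m := by
    rw [← ZMod.natCast_eq_zero_iff, ← h_at_a, ← hper _ (by omega), h_at_a_add]
  exact hdm (Nat.eq_zero_of_dvd_of_lt hdvd (digit_lt y m))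

theorem padicChoose_intCast (z : ℤ) (n : ℕ) :
    padicChoose (z : ℤ_[p]) n = ((Ring.choose z n : ℤ) : ZMod p) := by
  rw [padicChoose, ← Int.cast_natCast, ← Ring.choose_natCast]
  exact cast_ringChoose_eq_of_modEq (appr_intCast_modEq z (n + 1)) (lt_prime_pow_succ n)

end PadicChoose

theorem isUltimatelyPeriodic_cast_ringChoose (p : ℕ) [hp : Fact p.Prime] (z : ℤ) :
    IsUltimatelyPeriodic fun n => ((Ring.choose z n : ℤ) : ZMod p) := by
  rcases z with t | t
  · refine ⟨1, one_pos, t + 1, fun n hn => ?_⟩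
    simp only [Int.ofNat_eq_natCast, Ring.choose_natCast,
      Nat.choose_eq_zero_of_lt (show t < n + 1 by omega), Nat.choose_eq_zero_of_lt hn]
  · have hneg (m : ℕ) :
        Ring.choose (Int.negSucc t) m = (m : ℤ).negOnePow * ((m + t).choose t : ℤ) := by
      rw [Int.negSucc_eq, Ring.choose_neg, show (t : ℤ) + 1 + m - 1 = ((m + t : ℕ) : ℤ) by
        push_cast; ring, Ring.choose_natCast, Nat.choose_symm_add, Units.smul_def, smul_eq_mul]
    refine ⟨2 * p ^ t, Nat.mul_pos two_pos (pow_pos hp.out.pos t), 0, fun n _ => ?_⟩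
    have hmod : n + 2 * p ^ t + t ≡ n + t [MOD p ^ t] := by
      rw [show n + 2 * p ^ t + t = n + t + p ^ t * 2 by ring]
      exact Nat.add_mul_mod_self_left _ _ _
    simp only [hneg, Int.cast_mul, Int.cast_natCast,
      cast_choose_eq_of_modEq hmod (Nat.lt_pow_self hp.out.one_lt)]
    push_cast
    rw [Int.negOnePow_add, Int.negOnePow_two_mul, mul_one]

/-- For `y ∈ ℤ_p`, the sequence `n ↦ C(y,n) mod p` is ultimately periodic iff `y ∈ ℤ`. -/
theorem padicChoose_ultimately_periodic_iff {p : ℕ} [Fact p.Prime] (y : ℤ_[p]) :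
    (∃ r : ℕ, 0 < r ∧ ∃ w : ℕ, ∀ n ≥ w, padicChoose y (n + r) = padicChoose y n) ↔
      ∃ m : ℤ, y = (m : ℤ_[p]) := by
  change IsUltimatelyPeriodic (padicChoose y) ↔ _
  constructor
  · intro h
    by_contra! hy
    exact not_isUltimatelyPeriodic_padicChoose hy h
  · rintro ⟨m, rfl⟩
    rw [funext (padicChoose_intCast m)]
    exact isUltimatelyPeriodic_cast_ringChoose p m
end
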